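/- In any pair of orthogonal incomplete binary frequency squares of type (n; n-2), the superposition of the bottom-right 2×2 filled corner contains each of the four ordered pairs (0,0),(0,1),(1,0),(1,1) exactly once, arranged so that no row or column of the 2×2 corner contains a complementary pair (up to isomorphism the corner is [[00,01],[10,11]]). -/

import Mathlib

/-!
A row meeting the empty block has only its two cells in the last two columns filled, so balance
makes them complementary; likewise for columns. Hence outside the corner every pair `(a, b)` occurs
as often as its complement `(1 - a, 1 - b)`, and orthogonality (each pair occurring
`(4n - 4) / 4 = n - 1` times) makes the corner contain each pair as often as its complement.
In a full line where both squares are balanced, the two squares agree in an even number of cells.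
Applied to row and column `n - 2`, this makes the number of `(0, 0)` in the corner plus the number
of agreeing off-diagonal corner cells congruent to `n - 1`, which is odd; the only corners
surviving these constraints are the stated ones.
-/

/-- An incomplete binary frequency square of type (n; n-2): an n×n array
whose top-left (n-2)×(n-2) subarray is empty (its values are irrelevant),
all other cells contain 0 or 1, and every row and every column contains
equally many zeros and ones among its filled cells. -/
def IsIncFS (n : ℕ) (F : Fin n → Fin n → Fin 2) : Prop :=
  (∀ r : Fin n,
    (Finset.univ.filter fun c : Fin n =>
      ¬((r : ℕ) < n - 2 ∧ (c : ℕ) < n - 2) ∧ F r c = 0).card =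
    (Finset.univ.filter fun c : Fin n =>
      ¬((r : ℕ) < n - 2 ∧ (c : ℕ) < n - 2) ∧ F r c = 1).card) ∧
  (∀ c : Fin n,
    (Finset.univ.filter fun r : Fin n =>
      ¬((r : ℕ) < n - 2 ∧ (c : ℕ) < n - 2) ∧ F r c = 0).card =
    (Finset.univ.filter fun r : Fin n =>
      ¬((r : ℕ) < n - 2 ∧ (c : ℕ) < n - 2) ∧ F r c = 1).card)

/-- Two incomplete frequency squares of type (n; n-2) are orthogonal if each
of the four ordered pairs of symbols occurs equally often over the filled
cells of their superposition. -/
def IncOrth (n : ℕ) (F G : Fin n → Fin n → Fin 2) : Prop :=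
  ∀ a b a' b' : Fin 2,
    (Finset.univ.filter fun p : Fin n × Fin n =>
      ¬((p.1 : ℕ) < n - 2 ∧ (p.2 : ℕ) < n - 2) ∧
        F p.1 p.2 = a ∧ G p.1 p.2 = b).card =
    (Finset.univ.filter fun p : Fin n × Fin n =>
      ¬((p.1 : ℕ) < n - 2 ∧ (p.2 : ℕ) < n - 2) ∧
        F p.1 p.2 = a' ∧ G p.1 p.2 = b').card

open Finset

def hole (n : ℕ) : Finset (Fin n) := {i | (i : ℕ) < n - 2}

lemma mem_hole {n : ℕ} {i : Fin n} : i ∈ hole n ↔ (i : ℕ) < n - 2 := by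
  simp [hole]

lemma card_hole (n : ℕ) : #(hole n) = n - 2 := by
  simp [hole, Fin.card_filter_val_lt]

section Rim

variable {n : ℕ} {r₁ r₂ : Fin n}

lemma hole_compl (h₁ : (r₁ : ℕ) = n - 2) (h₂ : (r₂ : ℕ) = n - 1) : (hole n)ᶜ = {r₁, r₂} := by
  ext i
  simp only [mem_compl, mem_hole, mem_insert, mem_singleton, Fin.ext_iff, h₁, h₂]
  omega

lemma sum_univ_eq_sum_hole_add {M : Type*} [AddCommMonoid M] (hn : 2 ≤ n)
    (h₁ : (r₁ : ℕ) = n - 2) (h₂ : (r₂ : ℕ) = n - 1) (f : Fin n → M) :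
    ∑ i, f i = ∑ i ∈ hole n, f i + (f r₁ + f r₂) := by
  have hr : r₁ ≠ r₂ := by simp only [ne_eq, Fin.ext_iff, h₁, h₂]; omega
  rw [← sum_add_sum_compl (hole n), hole_compl h₁ h₂, sum_pair hr]

lemma card_filter_eq_hole_add (hn : 2 ≤ n) (h₁ : (r₁ : ℕ) = n - 2) (h₂ : (r₂ : ℕ) = n - 1)
    (p : Fin n → Prop) [DecidablePred p] :
    #{i | p i} = #{i ∈ hole n | p i} + ((if p r₁ then 1 else 0) + if p r₂ then 1 else 0) := by
  rw [card_filter, card_filter, sum_univ_eq_sum_hole_add hn h₁ h₂]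

lemma sum_filled {M : Type*} [AddCommMonoid M] (hn : 2 ≤ n)
    (h₁ : (r₁ : ℕ) = n - 2) (h₂ : (r₂ : ℕ) = n - 1) (φ : Fin n → Fin n → M) :
    ∑ x : Fin n × Fin n with ¬((x.1 : ℕ) < n - 2 ∧ (x.2 : ℕ) < n - 2), φ x.1 x.2 =
      ∑ i ∈ hole n, (φ i r₁ + φ i r₂ + φ r₁ i + φ r₂ i) +
        (φ r₁ r₁ + φ r₁ r₂ + φ r₂ r₁ + φ r₂ r₂) := by
  have hr₁ : ¬(r₁ : ℕ) < n - 2 := by omega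
  have hr₂ : ¬(r₂ : ℕ) < n - 2 := by omega
  have hsplit := sum_univ_eq_sum_hole_add (M := M) hn h₁ h₂
  have hhole : ∀ i ∈ hole n,
      (∑ c : Fin n, if ¬((i : ℕ) < n - 2 ∧ (c : ℕ) < n - 2) then φ i c else 0) =
        φ i r₁ + φ i r₂ := by
    intro i hi
    rw [mem_hole] at hi
    rw [hsplit, sum_eq_zero fun c hc => if_neg (not_not.2 ⟨hi, mem_hole.1 hc⟩)]
    simp [hr₁, hr₂]
  have hrim : ∀ r : Fin n, ¬(r : ℕ) < n - 2 →
      (∑ c : Fin n, if ¬((r : ℕ) < n - 2 ∧ (c : ℕ) < n - 2) then φ r c else 0) = ∑ c, φ r c := by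
    intro r hr
    simp [hr]
  rw [sum_filter, Fintype.sum_prod_type, hsplit, sum_congr rfl hhole, hrim r₁ hr₁, hrim r₂ hr₂,
    hsplit, hsplit]
  simp only [sum_add_distrib]
  abel

end Rim

lemma sum_card_filter_fin_two {ι : Type*} (s : Finset ι) (f g : ι → Fin 2) :
    #{i ∈ s | f i = 0 ∧ g i = 0} + #{i ∈ s | f i = 0 ∧ g i = 1} +
      #{i ∈ s | f i = 1 ∧ g i = 0} + #{i ∈ s | f i = 1 ∧ g i = 1} = #s := by
  have key : ∀ x y : Fin 2, ((if x = 0 ∧ y = 0 then 1 else 0) + (if x = 0 ∧ y = 1 then 1 else 0) +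
      (if x = 1 ∧ y = 0 then 1 else 0) + if x = 1 ∧ y = 1 then 1 else 0) = 1 := by decide
  rw [card_eq_sum_ones s]
  simp only [card_filter, ← sum_add_distrib, key]

lemma card_filter_eq_eq {ι : Type*} (s : Finset ι) (f g : ι → Fin 2) :
    #{i ∈ s | f i = g i} = #{i ∈ s | f i = 0 ∧ g i = 0} + #{i ∈ s | f i = 1 ∧ g i = 1} := by
  have key : ∀ x y : Fin 2, (if x = y then 1 else 0) =
      (if x = 0 ∧ y = 0 then 1 else 0) + if x = 1 ∧ y = 1 then 1 else 0 := by decide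
  simp only [card_filter, ← sum_add_distrib, key]

lemma even_card_filter_eq_of_balanced {ι : Type*} [Fintype ι] {f g : ι → Fin 2}
    (hf : #{i | f i = 0} = #{i | f i = 1}) (hg : #{i | g i = 0} = #{i | g i = 1}) :
    Even #{i | f i = g i} := by
  -- Sum `key` over `ι`; balance gives `#{f = 0} = card ι / 2 = #{g = 1}`.
  have key : ∀ x y : Fin 2, (if x = y then 1 else 0) + (if y = 1 then 1 else 0) =
      (if x = 0 then 1 else 0) + 2 * if x = 1 ∧ y = 1 then 1 else 0 := by decide
  have hpart : ∀ x : Fin 2, (if x = 0 then 1 else 0) + (if x = 1 then 1 else 0) = 1 := by decide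
  have hsum := Fintype.sum_congr _ _ fun i => key (f i) (g i)
  have hf' := Fintype.sum_congr _ _ fun i => hpart (f i)
  have hg' := Fintype.sum_congr _ _ fun i => hpart (g i)
  simp only [sum_add_distrib, ← mul_sum, ← card_filter] at hsum hf' hg'
  rw [even_iff_two_dvd]
  omega

lemma eq_one_sub_of_card_filter_eq {ι : Type*} [DecidableEq ι] {i j : ι} (hij : i ≠ j)
    {f : ι → Fin 2} (h : #{k ∈ {i, j} | f k = 0} = #{k ∈ {i, j} | f k = 1}) : f j = 1 - f i := by
  have hi : ∀ x : Fin 2, x = 0 ∨ x = 1 := by decide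
  rcases hi (f i) with hx | hx <;> rcases hi (f j) with hy | hy <;>
    simp [filter_insert, filter_singleton, hij, hx, hy] at h ⊢

namespace IsIncFS

variable {n : ℕ} {F : Fin n → Fin n → Fin 2}

lemma transpose (hF : IsIncFS n F) : IsIncFS n fun r c => F c r :=
  ⟨fun r => by simpa only [and_comm] using hF.2 r, fun c => by simpa only [and_comm] using hF.1 c⟩

lemma card_row_eq (hF : IsIncFS n F) {r : Fin n} (hr : ¬(r : ℕ) < n - 2) :
    #{c | F r c = 0} = #{c | F r c = 1} := by
  simpa [hr] using hF.1 r

lemma row_eq_one_sub (hF : IsIncFS n F) {r₁ r₂ : Fin n} (hn : 2 ≤ n)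
    (h₁ : (r₁ : ℕ) = n - 2) (h₂ : (r₂ : ℕ) = n - 1) {r : Fin n} (hr : r ∈ hole n) :
    F r r₂ = 1 - F r r₁ := by
  have hfilled : ∀ v : Fin 2,
      ({c | ¬((r : ℕ) < n - 2 ∧ (c : ℕ) < n - 2) ∧ F r c = v} : Finset (Fin n)) =
        {c ∈ ({r₁, r₂} : Finset (Fin n)) | F r c = v} := by
    intro v
    rw [← hole_compl h₁ h₂]
    ext c
    simp [mem_hole.1 hr, mem_hole]
  have hne : r₁ ≠ r₂ := by simp only [ne_eq, Fin.ext_iff, h₁, h₂]; omega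
  exact eq_one_sub_of_card_filter_eq hne (by simpa only [hfilled] using hF.1 r)

end IsIncFS

lemma card_filled_pair_eq {n : ℕ} {F G : Fin n → Fin n → Fin 2} (hF : IsIncFS n F)
    (hG : IsIncFS n G) {r₁ r₂ : Fin n} (hn : 2 ≤ n) (h₁ : (r₁ : ℕ) = n - 2)
    (h₂ : (r₂ : ℕ) = n - 1) (a b : Fin 2) :
    #{x : Fin n × Fin n | ¬((x.1 : ℕ) < n - 2 ∧ (x.2 : ℕ) < n - 2) ∧
        F x.1 x.2 = a ∧ G x.1 x.2 = b} =
      #{i ∈ hole n | F i r₁ = a ∧ G i r₁ = b} +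
        #{i ∈ hole n | F i r₁ = 1 - a ∧ G i r₁ = 1 - b} +
        #{i ∈ hole n | F r₁ i = a ∧ G r₁ i = b} +
        #{i ∈ hole n | F r₁ i = 1 - a ∧ G r₁ i = 1 - b} +
        [(F r₁ r₁, G r₁ r₁), (F r₁ r₂, G r₁ r₂), (F r₂ r₁, G r₂ r₁), (F r₂ r₂, G r₂ r₂)].count (a, b) := by
  have hsub : ∀ x a : Fin 2, 1 - x = a ↔ x = 1 - a := by decide
  have hrow : ∀ i ∈ hole n, (if F i r₂ = a ∧ G i r₂ = b then 1 else 0) =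
      if F i r₁ = 1 - a ∧ G i r₁ = 1 - b then 1 else 0 := by
    intro i hi
    simp only [hF.row_eq_one_sub hn h₁ h₂ hi, hG.row_eq_one_sub hn h₁ h₂ hi, hsub]
  have hcol : ∀ i ∈ hole n, (if F r₂ i = a ∧ G r₂ i = b then 1 else 0) =
      if F r₁ i = 1 - a ∧ G r₁ i = 1 - b then 1 else 0 := by
    intro i hi
    simp only [hF.transpose.row_eq_one_sub hn h₁ h₂ hi, hG.transpose.row_eq_one_sub hn h₁ h₂ hi,
      hsub]
  rw [← filter_filter, card_filter,
    sum_filled hn h₁ h₂ fun r c => if F r c = a ∧ G r c = b then 1 else 0]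
  simp only [sum_add_distrib]
  rw [sum_congr rfl hrow, sum_congr rfl hcol]
  simp only [card_filter, List.count_cons, List.count_nil, beq_iff_eq, Prod.mk.injEq]
  ring

lemma sum_count_fin_two (l : List (Fin 2 × Fin 2)) :
    l.count (0, 0) + l.count (0, 1) + l.count (1, 0) + l.count (1, 1) = l.length := by
  have key : ∀ x : Fin 2 × Fin 2, ((if x = (0, 0) then 1 else 0) + (if x = (0, 1) then 1 else 0) +
      (if x = (1, 0) then 1 else 0) + if x = (1, 1) then 1 else 0) = 1 := by decide
  induction l with
  | nil => rfl
  | cons x l ih =>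
    simp only [List.count_cons, List.length_cons, beq_iff_eq]
    have := key x
    omega

lemma corner_pattern : ∀ p q s t : Fin 2 × Fin 2,
    [p, q, s, t].count (0, 0) = [p, q, s, t].count (1, 1) →
    [p, q, s, t].count (0, 1) = [p, q, s, t].count (1, 0) →
    Odd ([p, q, s, t].count (0, 0) + (if q.1 = q.2 then 1 else 0) + if s.1 = s.2 then 1 else 0) →
    [p, q, s, t].Nodup ∧ p ≠ (1 - q.1, 1 - q.2) ∧ s ≠ (1 - t.1, 1 - t.2) ∧
      p ≠ (1 - s.1, 1 - s.2) ∧ q ≠ (1 - t.1, 1 - t.2) := by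
  decide

/-- In any pair of orthogonal incomplete frequency squares of type (n; n-2),
the superposition of the bottom-right 2×2 corner (rows and columns n-2, n-1)
contains each of the four ordered pairs exactly once, arranged so that no row
or column of the corner contains a complementary pair of tuples. -/
theorem stmt_19 (n : ℕ) (hn : 4 ≤ n) (hne : Even n)
    (F G : Fin n → Fin n → Fin 2)
    (hF : IsIncFS n F) (hG : IsIncFS n G) (h : IncOrth n F G) :
    ∀ r1 r2 : Fin n, (r1 : ℕ) = n - 2 → (r2 : ℕ) = n - 1 →
      (([(F r1 r1, G r1 r1), (F r1 r2, G r1 r2),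
         (F r2 r1, G r2 r1), (F r2 r2, G r2 r2)] : List (Fin 2 × Fin 2)).Nodup ∧
       -- no row of the corner contains a complementary pair
       (F r1 r1, G r1 r1) ≠ (1 - F r1 r2, 1 - G r1 r2) ∧
       (F r2 r1, G r2 r1) ≠ (1 - F r2 r2, 1 - G r2 r2) ∧
       -- no column of the corner contains a complementary pair
       (F r1 r1, G r1 r1) ≠ (1 - F r2 r1, 1 - G r2 r1) ∧
       (F r1 r2, G r1 r2) ≠ (1 - F r2 r2, 1 - G r2 r2)) := by
  intro r₁ r₂ h₁ h₂
  have hn₂ : 2 ≤ n := by omega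
  have hr₁ : ¬(r₁ : ℕ) < n - 2 := by omega
  have hN : ∀ a b, _ := card_filled_pair_eq hF hG hn₂ h₁ h₂
  have h00 := hN 0 0
  have h01 := hN 0 1
  have h10 := hN 1 0
  have h11 := hN 1 1
  simp only [sub_zero, sub_self] at h00 h01 h10 h11
  have hcorner := sum_count_fin_two
    [(F r₁ r₁, G r₁ r₁), (F r₁ r₂, G r₁ r₂), (F r₂ r₁, G r₂ r₁), (F r₂ r₂, G r₂ r₂)]
  have hcol := sum_card_filter_fin_two (hole n) (F · r₁) (G · r₁)
  have hrow := sum_card_filter_fin_two (hole n) (F r₁) (G r₁)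
  have hcolEven := even_card_filter_eq_of_balanced (hF.transpose.card_row_eq hr₁)
    (hG.transpose.card_row_eq hr₁)
  have hrowEven := even_card_filter_eq_of_balanced (hF.card_row_eq hr₁) (hG.card_row_eq hr₁)
  rw [card_filter_eq_hole_add hn₂ h₁ h₂, card_filter_eq_eq, Nat.even_iff] at hcolEven hrowEven
  rw [card_hole] at hcol hrow
  simp only [List.length_cons, List.length_nil] at hcorner
  obtain ⟨m, rfl⟩ := hne
  have ho₁ := h 0 0 1 1
  have ho₂ := h 0 1 1 0
  have ho₃ := h 0 0 0 1
  -- each pair occurs `n - 1` times, which is odd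
  refine corner_pattern _ _ _ _ (by omega) (by omega) (Nat.odd_iff.2 ?_)
  dsimp only
  omega
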